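/- Let f : ℝⁿ → ℝ and c : ℝⁿ → ℝᵐ be twice continuously differentiable, write g(x) = ∇f(x) and A(x) = ∇c(x) (the n×m matrix with columns ∇c_i(x)), and suppose A(x) has full column rank m for every x ∈ ℝⁿ. Fix σ ∈ ℝ and define y_σ(x) = (A(x)ᵀA(x))⁻¹(A(x)ᵀg(x) − σc(x)). Then y_σ is differentiable, and for every x ∈ ℝⁿ and every direction v ∈ ℝⁿ, the directional derivative satisfies A(x)ᵀA(x) · D y_σ(x)[v] = A(x)ᵀ (H_σ(x) − σI) v + S(x, g_σ(x)) v, where g_σ(x) = g(x) − A(x) y_σ(x), H_σ(x) = ∇²f(x) − Σ_{i=1}^{m} (y_σ(x))_i ∇²c_i(x), and S(x, w) is the m×n matrix whose i-th row is wᵀ∇²c_i(x). -/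

import Mathlib

/-!
The multiplier estimate solves the normal equations `AᵀA y = Aᵀg - σc`, whose coefficients are
`C¹`. By Cramer's rule `(AᵀA)⁻¹` has differentiable entries, so `y_σ` is differentiable, and the
product rule applied to both sides of the normal equations gives
`AᵀA Dy[v] = Aᵀ(∇²f v - DA[v] y - σ v) + DA[v]ᵀ(g - A y)`. The `k`-th column of `DA[v]` is
`∇²c_k v`, so `DA[v] y = Σ y_k ∇²c_k v` and `DA[v]ᵀ w = S(x, w) v`.
-/

open Matrix

theorem Matrix.isUnit_of_rank_eq_card {K ι : Type*} [Field K] [Fintype ι] [DecidableEq ι]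
    {A : Matrix ι ι K} (h : A.rank = Fintype.card ι) : IsUnit A := by
  rw [← mulVec_surjective_iff_isUnit, ← coe_mulVecLin, ← LinearMap.range_eq_top]
  exact Submodule.eq_top_of_finrank_eq (by rwa [Module.finrank_fintype_fun_eq_card])

section MatrixCalculus

variable {𝕜 E : Type*} [NontriviallyNormedField 𝕜] [NormedAddCommGroup E] [NormedSpace 𝕜 E]
  {ι κ : Type*} [Fintype κ]

theorem Differentiable.matrix_det [DecidableEq κ] {M : E → Matrix κ κ 𝕜}
    (hM : ∀ i j, Differentiable 𝕜 fun z => M z i j) : Differentiable 𝕜 fun z => (M z).det := by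
  simp only [det_apply]
  fun_prop

theorem Differentiable.matrix_adjugate [DecidableEq κ] {M : E → Matrix κ κ 𝕜}
    (hM : ∀ i j, Differentiable 𝕜 fun z => M z i j) (i j : κ) :
    Differentiable 𝕜 fun z => (M z).adjugate i j := by
  simp only [adjugate_apply]
  refine Differentiable.matrix_det fun k l => ?_
  by_cases hk : k = j
  · simp only [updateRow_apply, hk, if_true]
    exact differentiable_const _
  · simpa only [updateRow_apply, hk, if_false] using hM k l

theorem Differentiable.matrix_inv [DecidableEq κ] {M : E → Matrix κ κ 𝕜}
    (hM : ∀ i j, Differentiable 𝕜 fun z => M z i j) (hdet : ∀ z, (M z).det ≠ 0) (i j : κ) :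
    Differentiable 𝕜 fun z => (M z)⁻¹ i j := by
  simp only [inv_def, Ring.inverse_eq_inv', Matrix.smul_apply, smul_eq_mul]
  exact ((Differentiable.matrix_det hM).inv hdet).mul (Differentiable.matrix_adjugate hM i j)

variable {x : E}

theorem fderiv_pi_apply {Φ : E → ι → 𝕜} [Fintype ι] (hΦ : DifferentiableAt 𝕜 Φ x) (v : E)
    (i : ι) : fderiv 𝕜 (fun z => Φ z i) x v = fderiv 𝕜 Φ x v i := by
  rw [fderiv_apply hΦ]
  rfl

theorem DifferentiableAt.matrix_mulVec {M : E → Matrix ι κ 𝕜} {y : E → κ → 𝕜}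
    (hM : ∀ i j, DifferentiableAt 𝕜 (fun z => M z i j) x) (hy : DifferentiableAt 𝕜 y x) :
    DifferentiableAt 𝕜 (fun z => M z *ᵥ y z) x := by
  rw [differentiableAt_pi] at hy ⊢
  intro i
  simp only [mulVec, dotProduct]
  fun_prop

theorem fderiv_matrix_mulVec [Fintype ι] {M : E → Matrix ι κ 𝕜} {y : E → κ → 𝕜}
    (hM : ∀ i j, DifferentiableAt 𝕜 (fun z => M z i j) x) (hy : DifferentiableAt 𝕜 y x) (v : E) :
    fderiv 𝕜 (fun z => M z *ᵥ y z) x v =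
      (of fun i j => fderiv 𝕜 (fun z => M z i j) x v) *ᵥ y x + M x *ᵥ fderiv 𝕜 y x v := by
  ext i
  have hyk : ∀ k, DifferentiableAt 𝕜 (fun z => y z k) x := differentiableAt_pi.1 hy
  have hentry : (fun z => (M z *ᵥ y z) i) = fun z => ∑ j, M z i j * y z j := rfl
  rw [← fderiv_pi_apply (DifferentiableAt.matrix_mulVec hM hy), hentry,
    fderiv_fun_sum fun k _ => (hM i k).fun_mul (hyk k)]
  simp only [_root_.sum_apply, fderiv_fun_mul (hM i _) (hyk _), fderiv_apply hy,
    _root_.add_apply, _root_.smul_apply, ContinuousLinearMap.comp_apply,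
    ContinuousLinearMap.proj_apply, Finset.sum_add_distrib, Pi.add_apply, mulVec, dotProduct,
    of_apply, smul_eq_mul]
  rw [add_comm]
  simp only [mul_comm (y x _)]

theorem differentiable_transpose_mul_self_inv_mulVec [Fintype ι] [DecidableEq κ]
    {A : E → Matrix ι κ 𝕜} {b : E → ι → 𝕜} {r : E → κ → 𝕜}
    (hA : ∀ i k, Differentiable 𝕜 fun z => A z i k) (hb : Differentiable 𝕜 b)
    (hr : Differentiable 𝕜 r) (hdet : ∀ z, IsUnit ((A z)ᵀ * A z).det) (σ : 𝕜) :
    Differentiable 𝕜 fun z => ((A z)ᵀ * A z)⁻¹ *ᵥ ((A z)ᵀ *ᵥ b z - σ • r z) := by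
  have hM : ∀ j k, Differentiable 𝕜 fun z => ((A z)ᵀ * A z) j k := fun j k => by
    simp only [mul_apply]
    exact Differentiable.fun_sum fun l _ => (hA l j).mul (hA l k)
  exact fun z => DifferentiableAt.matrix_mulVec
    (fun j k => Differentiable.matrix_inv hM (fun z => (hdet z).ne_zero) j k z)
    ((DifferentiableAt.matrix_mulVec (fun k i => hA i k z) (hb z)).sub ((hr z).const_smul σ))

theorem transpose_mul_self_mulVec_fderiv [Fintype ι]
    {A : E → Matrix ι κ 𝕜} {y : E → κ → 𝕜} {b : E → ι → 𝕜} {r : E → κ → 𝕜} {σ : 𝕜}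
    (hA : ∀ i k, DifferentiableAt 𝕜 (fun z => A z i k) x) (hy : DifferentiableAt 𝕜 y x)
    (hb : DifferentiableAt 𝕜 b x) (hr : DifferentiableAt 𝕜 r x)
    (hnormal : ∀ z, (A z)ᵀ *ᵥ (A z *ᵥ y z) = (A z)ᵀ *ᵥ b z - σ • r z) (v : E) :
    let dA := of fun i k => fderiv 𝕜 (fun z => A z i k) x v
    ((A x)ᵀ * A x) *ᵥ fderiv 𝕜 y x v =
      (A x)ᵀ *ᵥ (fderiv 𝕜 b x v - dA *ᵥ y x) - σ • fderiv 𝕜 r x v + dAᵀ *ᵥ (b x - A x *ᵥ y x) := by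
  intro dA
  have hAT : ∀ k i, DifferentiableAt 𝕜 (fun z => (A z)ᵀ k i) x := fun k i => hA i k
  have hderiv := congrArg (fun F => fderiv 𝕜 F x v) (funext hnormal)
  rw [fderiv_matrix_mulVec hAT (DifferentiableAt.matrix_mulVec hA hy), fderiv_matrix_mulVec hA hy,
    fderiv_fun_sub (DifferentiableAt.matrix_mulVec hAT hb) (hr.fun_const_smul σ),
    fderiv_fun_const_smul hr, _root_.sub_apply, _root_.smul_apply,
    fderiv_matrix_mulVec hAT hb] at hderiv
  change dAᵀ *ᵥ _ + _ = dAᵀ *ᵥ _ + _ - _ at hderiv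
  rw [← mulVec_mulVec]
  simp only [mulVec_add, mulVec_sub] at hderiv ⊢
  linear_combination (norm := module) hderiv

end MatrixCalculus

section Columns

variable {R ι κ : Type*} [CommSemiring R] [Fintype ι]

theorem Matrix.sum_smul_mulVec [Fintype κ] (y : κ → R) (H : κ → Matrix ι ι R) (v : ι → R) :
    (∑ k, y k • H k) *ᵥ v = (of fun i k => (H k *ᵥ v) i) *ᵥ y := by
  ext i
  simp only [sum_mulVec, Finset.sum_apply, smul_mulVec, Pi.smul_apply, smul_eq_mul]
  exact Finset.sum_congr rfl fun k _ => mul_comm _ _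

theorem Matrix.mulVec_eq_transpose_of_mulVec {H : κ → Matrix ι ι R} {w : ι → R}
    {S : Matrix κ ι R} (hS : ∀ k j, S k j = (w ᵥ* H k) j) (v : ι → R) :
    S *ᵥ v = (of fun i k => (H k *ᵥ v) i)ᵀ *ᵥ w := by
  ext k
  change (fun j => S k j) ⬝ᵥ v = (H k *ᵥ v) ⬝ᵥ w
  rw [dotProduct_comm _ w, dotProduct_mulVec]
  exact congrArg (· ⬝ᵥ v) (funext (hS k))

end Columns

section Euclidean

variable {𝕜 ι κ : Type*} [RCLike 𝕜] [Fintype ι] [Fintype κ] [DecidableEq κ]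

theorem ContinuousLinearMap.ofLp_apply_eq_mulVec
    {L : EuclideanSpace 𝕜 κ →L[𝕜] EuclideanSpace 𝕜 ι} {J : Matrix ι κ 𝕜}
    (hJ : ∀ i j, J i j = L (EuclideanSpace.single j 1) i) (v : EuclideanSpace 𝕜 κ) :
    ⇑(L v) = J *ᵥ ⇑v := by
  have hmat : J = LinearMap.toMatrix
      (EuclideanSpace.basisFun κ 𝕜).toBasis (EuclideanSpace.basisFun ι 𝕜).toBasis L := by
    ext i j
    simp [hJ, LinearMap.toMatrix_apply, EuclideanSpace.basisFun_apply]
  rw [hmat]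
  exact (LinearMap.toMatrix_mulVec_repr (EuclideanSpace.basisFun κ 𝕜).toBasis
    (EuclideanSpace.basisFun ι 𝕜).toBasis L.toLinearMap v).symm

theorem fderiv_ofLp_eq_mulVec {F : EuclideanSpace 𝕜 κ → EuclideanSpace 𝕜 ι}
    {x : EuclideanSpace 𝕜 κ} {J : Matrix ι κ 𝕜}
    (hJ : ∀ i j, J i j = fderiv 𝕜 F x (EuclideanSpace.single j 1) i) (v : EuclideanSpace 𝕜 κ) :
    fderiv 𝕜 (fun z => ⇑(F z)) x v = J *ᵥ ⇑v := by
  have h := (PiLp.continuousLinearEquiv 2 𝕜 fun _ : ι => 𝕜).comp_fderiv (f := F) (x := x)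
  rw [← (fderiv 𝕜 F x).ofLp_apply_eq_mulVec hJ v]
  exact congrArg (fun L => L v) h

end Euclidean

section Gradient

variable {ι κ : Type*} [Fintype ι]

theorem ContDiff.differentiable_ofLp_gradient {h : EuclideanSpace ℝ ι → ℝ}
    (hh : ContDiff ℝ 2 h) : Differentiable ℝ fun z => ⇑(gradient h z) :=
  (PiLp.continuousLinearEquiv 2 ℝ fun _ : ι => ℝ).differentiable.comp <|
    (InnerProductSpace.toDual ℝ _).symm.toContinuousLinearEquiv.differentiable.comp
      ((hh.fderiv_right (m := 1) (by norm_num)).differentiable one_ne_zero)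

theorem fderiv_eq_gradient_dotProduct {h : EuclideanSpace ℝ ι → ℝ} (x v : EuclideanSpace ℝ ι) :
    fderiv ℝ h x v = ⇑(gradient h x) ⬝ᵥ ⇑v := by
  rw [← inner_gradient_left, EuclideanSpace.inner_eq_star_dotProduct]
  simp [dotProduct_comm]

theorem fderiv_ofLp_eq_transpose_mulVec [Fintype κ] {c : EuclideanSpace ℝ ι → EuclideanSpace ℝ κ}
    {x : EuclideanSpace ℝ ι} (hc : DifferentiableAt ℝ (fun z => ⇑(c z)) x) {A : Matrix ι κ ℝ}
    (hA : ∀ i k, A i k = gradient (fun z => c z k) x i) (v : EuclideanSpace ℝ ι) :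
    fderiv ℝ (fun z => ⇑(c z)) x v = Aᵀ *ᵥ ⇑v := by
  ext k
  rw [← fderiv_pi_apply hc, fderiv_eq_gradient_dotProduct]
  exact congrArg (· ⬝ᵥ ⇑v) (funext fun i => (hA i k).symm)

end Gradient

/-- equation (3.4b). Differentiating the normal equations
`A(x)ᵀA(x) y_σ(x) = A(x)ᵀg(x) − σc(x)` for Fletcher's multiplier estimate gives, for
every `x` and direction `v`,
`A(x)ᵀA(x) · D y_σ(x)[v] = A(x)ᵀ(H_σ(x) − σI)v + S(x, g_σ(x))v`, where
`g_σ = g − A y_σ`, `H_σ = ∇²f − Σᵢ (y_σ)ᵢ ∇²cᵢ`, and `S(x, w)` has rows `wᵀ∇²cᵢ(x)`. -/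
theorem multiplier_estimate_jacobian_identity
    {n m : ℕ}
    (f : EuclideanSpace ℝ (Fin n) → ℝ) (hf : ContDiff ℝ 2 f)
    (c : EuclideanSpace ℝ (Fin n) → EuclideanSpace ℝ (Fin m)) (hc : ContDiff ℝ 2 c)
    (A : EuclideanSpace ℝ (Fin n) → Matrix (Fin n) (Fin m) ℝ)
    (hA : ∀ x, ∀ i : Fin n, ∀ j : Fin m, A x i j = gradient (fun z => c z j) x i)
    (hrank : ∀ x, (A x).rank = m)
    (σ : ℝ)
    (yσ : EuclideanSpace ℝ (Fin n) → Fin m → ℝ)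
    (hyσ : ∀ x, yσ x =
      ((A x)ᵀ * A x)⁻¹.mulVec
        ((A x)ᵀ.mulVec (fun i => gradient f x i) - σ • fun j => c x j))
    (Hf : EuclideanSpace ℝ (Fin n) → Matrix (Fin n) (Fin n) ℝ)
    (hHf : ∀ x i j, Hf x i j = fderiv ℝ (gradient f) x (EuclideanSpace.single j 1) i)
    (Hc : Fin m → EuclideanSpace ℝ (Fin n) → Matrix (Fin n) (Fin n) ℝ)
    (hHc : ∀ k x i j, Hc k x i j =
      fderiv ℝ (gradient fun z => c z k) x (EuclideanSpace.single j 1) i)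
    (gσ : EuclideanSpace ℝ (Fin n) → Fin n → ℝ)
    (hgσ : ∀ x, gσ x = (fun i => gradient f x i) - (A x).mulVec (yσ x))
    (Hσ : EuclideanSpace ℝ (Fin n) → Matrix (Fin n) (Fin n) ℝ)
    (hHσ : ∀ x, Hσ x = Hf x - ∑ k : Fin m, yσ x k • Hc k x)
    (Smat : EuclideanSpace ℝ (Fin n) → (Fin n → ℝ) → Matrix (Fin m) (Fin n) ℝ)
    (hSmat : ∀ x w k j, Smat x w k j = Matrix.vecMul w (Hc k x) j) :
    Differentiable ℝ yσ ∧
    ∀ (x : EuclideanSpace ℝ (Fin n)) (v : EuclideanSpace ℝ (Fin n)),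
      ((A x)ᵀ * A x).mulVec (fderiv ℝ yσ x v) =
        (A x)ᵀ.mulVec ((Hσ x - σ • 1).mulVec v) + (Smat x (gσ x)).mulVec v := by
  have hck : ∀ k, ContDiff ℝ 2 fun z => c z k := fun k =>
    (EuclideanSpace.proj (𝕜 := ℝ) k).contDiff.comp hc
  have hAgrad : ∀ i k, (fun z => A z i k) = fun z => gradient (fun w => c w k) z i :=
    fun i k => funext fun z => hA z i k
  have hAdiff : ∀ i k, Differentiable ℝ fun z => A z i k := fun i k =>
    hAgrad i k ▸ differentiable_pi.1 (hck k).differentiable_ofLp_gradient i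
  have hgdiff := hf.differentiable_ofLp_gradient
  have hcdiff : Differentiable ℝ fun z => ⇑(c z) :=
    (PiLp.continuousLinearEquiv 2 ℝ fun _ : Fin m => ℝ).differentiable.comp
      (hc.differentiable two_ne_zero)
  have hdet : ∀ z, IsUnit ((A z)ᵀ * A z).det := fun z =>
    (isUnit_iff_isUnit_det _).1 <| isUnit_of_rank_eq_card <| by
      rw [rank_transpose_mul_self, hrank, Fintype.card_fin]
  have hydiff : Differentiable ℝ yσ := funext hyσ ▸
    differentiable_transpose_mul_self_inv_mulVec hAdiff hgdiff hcdiff hdet σ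
  refine ⟨hydiff, fun x v => ?_⟩
  have hdA : (of fun i k => fderiv ℝ (fun z => A z i k) x v) = of fun i k => (Hc k x *ᵥ v) i := by
    ext i k
    rw [of_apply, of_apply, hAgrad, fderiv_pi_apply ((hck k).differentiable_ofLp_gradient x),
      fderiv_ofLp_eq_mulVec (hHc k x)]
  have hnormal : ∀ z, (A z)ᵀ *ᵥ (A z *ᵥ yσ z) = (A z)ᵀ *ᵥ ⇑(gradient f z) - σ • ⇑(c z) :=
    fun z => by rw [mulVec_mulVec, hyσ z, mulVec_mulVec, mul_nonsing_inv _ (hdet z), one_mulVec]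
  rw [transpose_mul_self_mulVec_fderiv (fun i k => hAdiff i k x) (hydiff x) (hgdiff x) (hcdiff x)
      hnormal v, hdA, fderiv_ofLp_eq_mulVec (hHf x), fderiv_ofLp_eq_transpose_mulVec (hcdiff x)
      (hA x), mulVec_eq_transpose_of_mulVec (hSmat x (gσ x)), hgσ, hHσ, sub_mulVec, sub_mulVec,
    sum_smul_mulVec, smul_mulVec, one_mulVec]
  simp only [mulVec_sub, mulVec_smul]
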